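/- Let L, M, K be positive integers and let Θ₁, …, Θ_L be mutually independent random M×K matrices such that, almost surely, every column of every Θ_l has nonnegative entries summing to 1. Suppose that for every l, E[(Θ_l)ᵀ·Θ_l] = a·1_K·1_Kᵀ + c₁·I_K, where 0 ≤ a ≤ 1 and 0 < c₁ < 1 are constants, and set c₂ := K·a + c₁. Let Θ ∈ R^{(L·M)×K} be the matrix obtained by stacking Θ₁, …, Θ_L vertically. Then: (i) P( σ_K(Θ)² ≥ c₁·L/2 ) ≥ 1 − K·exp(−c₁²·L/(80·K²)); (ii) P( σ₁(Θ)² ≤ 3·c₂·L/2 ) ≥ 1 − K·exp(−c₁²·L/(80·K²)); and (iii) P( σ_K(Θ) > 0 and σ₁(Θ)²/σ_K(Θ)² ≤ 3·c₂/c₁ ) ≥ 1 − 2·K·exp(−c₁²·L/(80·K²)). -/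

import Mathlib

open scoped BigOperators
open MeasureTheory ProbabilityTheory Matrix

noncomputable def vecNorm2 {n : ℕ} (v : Fin n → ℝ) : ℝ :=
  Real.sqrt (∑ j, (v j) ^ 2)

/-- `singVal A k` is the `k`-th largest singular value of `A` (1-indexed),
via the Courant–Fischer max-min characterization. -/
noncomputable def singVal {m n : ℕ} (A : Matrix (Fin m) (Fin n) ℝ) (k : ℕ) : ℝ :=
  sSup {r : ℝ | ∃ W : Submodule ℝ (Fin n → ℝ), Module.finrank ℝ W = k ∧
      ∀ x ∈ W, r * vecNorm2 x ≤ vecNorm2 (A.mulVec x)}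

/-!
The Gram matrix `Θᵀ Θ = ∑ₗ Θₗᵀ Θₗ` is a sum of `L` independent matrices whose entries lie in
`[0, 1]` (the columns of `Θₗ` are probability vectors) and whose mean is `L (a 𝟙𝟙ᵀ + c₁ I)`.
By Hoeffding's inequality each entry stays within `t = c₁ L / (2K)` of its mean, on each side,
except with probability `exp (-c₁² L / (2K²))`. If it does, the quadratic form `xᵀ Θᵀ Θ x` differs
from `L (a (∑ x)² + c₁ ‖x‖²)` by at most `K t ‖x‖² = c₁ L ‖x‖² / 2`, and the max–min
characterization of singular values turns this into (i) and (ii). Each of them needs only the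
`K (2K - 1)` one-sided entry events (the diagonal matters on one side only), which a union bound
controls once `K ≤ exp (c₁² L / (80 K²))`; otherwise the claims are trivial. Part (iii) is the
intersection of the good events of (i) and (ii).
-/

section SingularValues

variable {m n : ℕ}

lemma vecNorm2_eq_norm (v : Fin n → ℝ) : vecNorm2 v = ‖WithLp.toLp 2 v‖ := by
  simp [vecNorm2, EuclideanSpace.norm_eq]

lemma vecNorm2_nonneg (v : Fin n → ℝ) : 0 ≤ vecNorm2 v := Real.sqrt_nonneg _

lemma vecNorm2_pos {v : Fin n → ℝ} (hv : v ≠ 0) : 0 < vecNorm2 v := by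
  rw [vecNorm2_eq_norm]
  exact norm_pos_iff.2 (by simpa using hv)

lemma vecNorm2_sq (v : Fin n → ℝ) : vecNorm2 v ^ 2 = v ⬝ᵥ v := by
  rw [vecNorm2, Real.sq_sqrt (by positivity), dotProduct]
  simp_rw [sq]

lemma vecNorm2_mulVec_sq (A : Matrix (Fin m) (Fin n) ℝ) (x : Fin n → ℝ) :
    vecNorm2 (A *ᵥ x) ^ 2 = x ⬝ᵥ (Aᵀ * A) *ᵥ x := by
  rw [vecNorm2_sq, ← mulVec_mulVec, dotProduct_mulVec x, vecMul_transpose]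

open scoped Matrix.Norms.L2Operator in
lemma exists_vecNorm2_mulVec_le (A : Matrix (Fin m) (Fin n) ℝ) :
    ∃ C, ∀ x, vecNorm2 (A *ᵥ x) ≤ C * vecNorm2 x :=
  ⟨‖A‖, fun x => by simpa [vecNorm2_eq_norm] using A.l2_opNorm_mulVec (WithLp.toLp 2 x)⟩

lemma singVal_nonneg (A : Matrix (Fin m) (Fin n) ℝ) (k : ℕ) : 0 ≤ singVal A k := by
  by_cases hW : ∃ W : Submodule ℝ (Fin n → ℝ), Module.finrank ℝ W = k
  · obtain ⟨W, hW⟩ := hW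
    exact Real.sSup_nonneg' ⟨0, ⟨W, hW, fun x _ => by simpa using vecNorm2_nonneg _⟩, le_rfl⟩
  · push Not at hW
    have hempty : {r : ℝ | ∃ W : Submodule ℝ (Fin n → ℝ), Module.finrank ℝ W = k ∧
        ∀ x ∈ W, r * vecNorm2 x ≤ vecNorm2 (A *ᵥ x)} = ∅ :=
      Set.eq_empty_of_forall_notMem fun r ⟨W, hWk, _⟩ => hW W hWk
    rw [singVal, hempty, Real.sSup_empty]

lemma le_of_mul_vecNorm2_le_on_submodule {A : Matrix (Fin m) (Fin n) ℝ}
    {W : Submodule ℝ (Fin n → ℝ)} (hW : 0 < Module.finrank ℝ W) {r C : ℝ}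
    (hr : ∀ x ∈ W, r * vecNorm2 x ≤ vecNorm2 (A *ᵥ x))
    (hC : ∀ x, vecNorm2 (A *ᵥ x) ≤ C * vecNorm2 x) : r ≤ C := by
  obtain ⟨x, hxW, hx0⟩ := W.exists_mem_ne_zero_of_ne_bot (Submodule.one_le_finrank_iff.1 hW)
  exact le_of_mul_le_mul_right ((hr x hxW).trans (hC x)) (vecNorm2_pos hx0)

lemma le_singVal_sq_of_forall_le (hn : 0 < n) (A : Matrix (Fin m) (Fin n) ℝ) {β : ℝ}
    (h : ∀ x, β * (x ⬝ᵥ x) ≤ x ⬝ᵥ (Aᵀ * A) *ᵥ x) : β ≤ singVal A n ^ 2 := by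
  rcases lt_or_ge β 0 with hβ | hβ
  · exact hβ.le.trans (sq_nonneg _)
  obtain ⟨C, hC⟩ := exists_vecNorm2_mulVec_le A
  have hbdd : BddAbove {r : ℝ | ∃ W : Submodule ℝ (Fin n → ℝ), Module.finrank ℝ W = n ∧
      ∀ x ∈ W, r * vecNorm2 x ≤ vecNorm2 (A *ᵥ x)} :=
    ⟨C, fun r ⟨W, hWn, hr⟩ => le_of_mul_vecNorm2_le_on_submodule (by rwa [hWn]) hr hC⟩
  have hmem : ∀ x, √β * vecNorm2 x ≤ vecNorm2 (A *ᵥ x) := fun x =>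
    (pow_le_pow_iff_left₀ (mul_nonneg (Real.sqrt_nonneg _) (vecNorm2_nonneg _))
      (vecNorm2_nonneg _) two_ne_zero).1 <| by
      rw [mul_pow, Real.sq_sqrt hβ, vecNorm2_sq, vecNorm2_mulVec_sq]
      exact h x
  exact (Real.sqrt_le_left (singVal_nonneg A n)).1 <|
    le_csSup hbdd ⟨⊤, by simp, fun x _ => hmem x⟩

lemma singVal_one_sq_le_of_forall_le (hn : 0 < n) (A : Matrix (Fin m) (Fin n) ℝ) {γ : ℝ}
    (h : ∀ x, x ⬝ᵥ (Aᵀ * A) *ᵥ x ≤ γ * (x ⬝ᵥ x)) : singVal A 1 ^ 2 ≤ γ := by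
  set e : Fin n → ℝ := Pi.single ⟨0, hn⟩ 1
  have he : e ≠ 0 := Pi.single_ne_zero_iff.2 one_ne_zero
  have hγ : 0 ≤ γ := by
    have := h e
    rw [← vecNorm2_mulVec_sq, ← vecNorm2_sq] at this
    exact nonneg_of_mul_nonneg_left ((sq_nonneg _).trans this) (pow_pos (vecNorm2_pos he) 2)
  have hbound : ∀ x, vecNorm2 (A *ᵥ x) ≤ √γ * vecNorm2 x := fun x =>
    (pow_le_pow_iff_left₀ (vecNorm2_nonneg _)
      (mul_nonneg (Real.sqrt_nonneg _) (vecNorm2_nonneg _)) two_ne_zero).1 <| by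
      rw [mul_pow, Real.sq_sqrt hγ, vecNorm2_mulVec_sq, vecNorm2_sq]
      exact h x
  have hle : singVal A 1 ≤ √γ :=
    csSup_le ⟨0, Submodule.span ℝ {e}, finrank_span_singleton he,
        fun x _ => by simpa using vecNorm2_nonneg _⟩
      fun r ⟨W, hW, hr⟩ => le_of_mul_vecNorm2_le_on_submodule (by rw [hW]; exact one_pos) hr hbound
  calc singVal A 1 ^ 2 ≤ √γ ^ 2 := pow_le_pow_left₀ (singVal_nonneg A 1) hle 2
    _ = γ := Real.sq_sqrt hγ

end SingularValues

section QuadraticForm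

variable {ι : Type*} [Fintype ι]

lemma dotProduct_mulVec_add_ite [DecidableEq ι] (a c : ℝ) (x : ι → ℝ) :
    x ⬝ᵥ (of fun k k' => a + if k = k' then c else 0) *ᵥ x
      = a * (∑ k, x k) ^ 2 + c * (x ⬝ᵥ x) := by
  have hrow : ∀ k, ((of fun k k' => a + if k = k' then c else 0) *ᵥ x) k
      = a * ∑ k', x k' + c * x k := fun k => by
    simp [mulVec, dotProduct, add_mul, Finset.sum_add_distrib, Finset.mul_sum, ite_mul]
  simp only [dotProduct, hrow, mul_add, Finset.sum_add_distrib, ← Finset.sum_mul,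
    mul_left_comm _ c, ← Finset.mul_sum]
  ring

lemma neg_card_mul_le_dotProduct_mulVec {D : Matrix ι ι ℝ} {t : ℝ} (ht : 0 ≤ t)
    (hlow : ∀ k k', -t ≤ D k k') (hup : ∀ k k', k ≠ k' → D k k' ≤ t) (x : ι → ℝ) :
    -(Fintype.card ι * t * (x ⬝ᵥ x)) ≤ x ⬝ᵥ D *ᵥ x := by
  have hterm : ∀ k k', -(t * (|x k| * |x k'|)) ≤ x k * (D k k' * x k') := by
    intro k k'
    rcases eq_or_ne k k' with rfl | hne
    · nlinarith [hlow k k, abs_mul_abs_self (x k), sq_nonneg (x k)]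
    · have : |x k * (D k k' * x k')| ≤ t * (|x k| * |x k'|) := by
        rw [abs_mul, abs_mul]
        nlinarith [abs_le.2 ⟨hlow k k', hup k k' hne⟩, abs_nonneg (x k), abs_nonneg (x k'),
          mul_nonneg (abs_nonneg (x k)) (abs_nonneg (x k'))]
      exact neg_le_of_abs_le this
  have hcs : (∑ k, |x k|) ^ 2 ≤ Fintype.card ι * (x ⬝ᵥ x) := by
    simpa [dotProduct, ← sq] using
      sq_sum_le_card_mul_sum_sq (s := Finset.univ) (f := fun k => |x k|)
  calc -(Fintype.card ι * t * (x ⬝ᵥ x)) ≤ -(t * (∑ k, |x k|) ^ 2) := by nlinarith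
    _ = ∑ k, ∑ k', -(t * (|x k| * |x k'|)) := by
      rw [sq, Finset.sum_mul_sum, Finset.mul_sum, ← Finset.sum_neg_distrib]
      simp only [Finset.mul_sum, Finset.sum_neg_distrib]
    _ ≤ x ⬝ᵥ D *ᵥ x := by
      simp only [dotProduct, mulVec, Finset.mul_sum]
      exact Finset.sum_le_sum fun k _ => Finset.sum_le_sum fun k' _ => hterm k k'

lemma dotProduct_mulVec_le_card_mul {D : Matrix ι ι ℝ} {t : ℝ} (ht : 0 ≤ t)
    (hup : ∀ k k', D k k' ≤ t) (hlow : ∀ k k', k ≠ k' → -t ≤ D k k') (x : ι → ℝ) :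
    x ⬝ᵥ D *ᵥ x ≤ Fintype.card ι * t * (x ⬝ᵥ x) := by
  have := neg_card_mul_le_dotProduct_mulVec (D := -D) ht (fun k k' => by simpa using hup k k')
    (fun k k' hne => by simpa using neg_le.1 (hlow k k' hne)) x
  rwa [neg_mulVec, dotProduct_neg, neg_le_neg_iff] at this

end QuadraticForm

lemma dotProduct_mem_Icc_of_mem_stdSimplex {ι : Type*} [Fintype ι] {u v : ι → ℝ}
    (hu : u ∈ stdSimplex ℝ ι) (hv : v ∈ stdSimplex ℝ ι) : u ⬝ᵥ v ∈ Set.Icc 0 1 :=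
  ⟨Finset.sum_nonneg fun i _ => mul_nonneg (hu.1 i) (hv.1 i),
    (Finset.sum_le_sum fun i _ => mul_le_of_le_one_right (hu.1 i)
      (mem_Icc_of_mem_stdSimplex hv i).2).trans hu.2.le⟩

lemma transpose_mul_self_of_forall_eq_blocks {R : Type*} [NonUnitalNonAssocSemiring R]
    {L M K : ℕ} (A : Matrix (Fin (L * M)) (Fin K) R) (B : Fin L → Matrix (Fin M) (Fin K) R)
    (hA : ∀ i k, A i k = B (finProdFinEquiv.symm i).1 (finProdFinEquiv.symm i).2 k) :
    Aᵀ * A = ∑ l, (B l)ᵀ * B l := by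
  ext k k'
  simp only [mul_apply, transpose_apply, Matrix.sum_apply, hA]
  rw [← Fintype.sum_prod_type']
  exact Fintype.sum_equiv finProdFinEquiv.symm _ _ fun _ => rfl

section GramDeviation

variable {m K : ℕ} {a c t : ℝ}

lemma sub_mul_le_singVal_sq (hK : 0 < K) (A : Matrix (Fin m) (Fin K) ℝ) (ha : 0 ≤ a)
    (ht : 0 ≤ t) (hlow : ∀ k k', (a + if k = k' then c else 0) - (Aᵀ * A) k k' ≤ t)
    (hup : ∀ k k', k ≠ k' → (Aᵀ * A) k k' - (a + if k = k' then c else 0) ≤ t) :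
    c - K * t ≤ singVal A K ^ 2 := by
  refine le_singVal_sq_of_forall_le hK A fun x => ?_
  have hdev := neg_card_mul_le_dotProduct_mulVec
    (D := Aᵀ * A - of fun k k' => a + if k = k' then c else 0) ht
    (fun k k' => by rw [Matrix.sub_apply, of_apply]; linarith [hlow k k'])
    (fun k k' hne => by rw [Matrix.sub_apply, of_apply]; linarith [hup k k' hne]) x
  rw [sub_mulVec, dotProduct_sub, dotProduct_mulVec_add_ite, Fintype.card_fin] at hdev
  nlinarith [mul_nonneg ha (sq_nonneg (∑ k, x k))]

lemma singVal_one_sq_le_add_mul (hK : 0 < K) (A : Matrix (Fin m) (Fin K) ℝ) (ha : 0 ≤ a)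
    (ht : 0 ≤ t) (hup : ∀ k k', (Aᵀ * A) k k' - (a + if k = k' then c else 0) ≤ t)
    (hlow : ∀ k k', k ≠ k' → (a + if k = k' then c else 0) - (Aᵀ * A) k k' ≤ t) :
    singVal A 1 ^ 2 ≤ K * a + c + K * t := by
  refine singVal_one_sq_le_of_forall_le hK A fun x => ?_
  have hdev := dotProduct_mulVec_le_card_mul
    (D := Aᵀ * A - of fun k k' => a + if k = k' then c else 0) ht
    (fun k k' => by rw [Matrix.sub_apply, of_apply]; linarith [hup k k'])
    (fun k k' hne => by rw [Matrix.sub_apply, of_apply]; linarith [hlow k k' hne]) x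
  rw [sub_mulVec, dotProduct_sub, dotProduct_mulVec_add_ite, Fintype.card_fin] at hdev
  have hcs : (∑ k, x k) ^ 2 ≤ K * (x ⬝ᵥ x) := by
    simpa [dotProduct, ← sq] using sq_sum_le_card_mul_sum_sq (s := Finset.univ) (f := x)
  nlinarith [mul_le_mul_of_nonneg_left hcs ha]

end GramDeviation

section UnionBounds

variable {Ω : Type*} [MeasurableSpace Ω] {μ : Measure Ω}

lemma ofReal_one_sub_le_of_compl_subset [IsProbabilityMeasure μ] {B T : Set Ω} {ε : ℝ}
    (hB : μ.real B ≤ ε) (hT : ∀ ω ∉ B, ω ∈ T) : ENNReal.ofReal (1 - ε) ≤ μ T := by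
  rw [ENNReal.ofReal_le_iff_le_toReal (measure_ne_top μ T), ← measureReal_def]
  have hcover : 1 ≤ μ.real T + μ.real Tᶜ := by
    simpa using measureReal_union_le (μ := μ) T Tᶜ
  have hcompl : μ.real Tᶜ ≤ μ.real B :=
    measureReal_mono fun ω hωT => by_contra fun hωB => hωT (hT ω hωB)
  linarith

lemma measureReal_biUnion_le_card_mul {β : Type*} (s : Finset β) {B : β → Set Ω} {δ : ℝ}
    (h : ∀ i ∈ s, μ.real (B i) ≤ δ) : μ.real (⋃ i ∈ s, B i) ≤ s.card * δ :=
  (measureReal_biUnion_finset_le s B).trans <| by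
    simpa using Finset.sum_le_card_nsmul s _ δ h

lemma measureReal_biUnion_univ_union_offDiag_le {ι : Type*} [Fintype ι] [DecidableEq ι]
    {Φ Ψ : ι × ι → Set Ω} {δ : ℝ} (hΦ : ∀ p, μ.real (Φ p) ≤ δ) (hΨ : ∀ p, μ.real (Ψ p) ≤ δ) :
    μ.real ((⋃ p ∈ Finset.univ, Φ p) ∪ ⋃ p ∈ Finset.univ.offDiag, Ψ p)
      ≤ Fintype.card ι * (2 * Fintype.card ι - 1) * δ := by
  have hcard : ((Finset.univ : Finset (ι × ι)).card : ℝ)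
      + ((Finset.univ : Finset ι).offDiag).card
      = Fintype.card ι * (2 * Fintype.card ι - 1) := by
    rw [Finset.offDiag_card, Nat.cast_sub (Nat.le_mul_self _), Finset.card_univ,
      Fintype.card_prod, Finset.card_univ]
    push_cast
    ring
  calc _ ≤ _ := measureReal_union_le _ _
    _ ≤ _ := add_le_add (measureReal_biUnion_le_card_mul _ fun p _ => hΦ p)
        (measureReal_biUnion_le_card_mul _ fun p _ => hΨ p)
    _ = _ := by rw [← add_mul, hcard]

end UnionBounds

section GramEvents

variable {Ω : Type*} {n K : ℕ}

def gramBelow (A : Ω → Matrix (Fin n) (Fin K) ℝ) (a c t : ℝ) (p : Fin K × Fin K) : Set Ω :=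
  {ω | t ≤ (a + if p.1 = p.2 then c else 0) - ((A ω)ᵀ * A ω) p.1 p.2}

def gramAbove (A : Ω → Matrix (Fin n) (Fin K) ℝ) (a c t : ℝ) (p : Fin K × Fin K) : Set Ω :=
  {ω | t ≤ ((A ω)ᵀ * A ω) p.1 p.2 - (a + if p.1 = p.2 then c else 0)}

variable {A : Ω → Matrix (Fin n) (Fin K) ℝ} {a c t : ℝ}

lemma sub_mul_le_singVal_sq_of_notMem (hK : 0 < K) (ha : 0 ≤ a) (ht : 0 ≤ t) {ω : Ω}
    (hω : ω ∉ (⋃ p ∈ Finset.univ, gramBelow A a c t p) ∪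
      ⋃ p ∈ Finset.univ.offDiag, gramAbove A a c t p) :
    c - K * t ≤ singVal (A ω) K ^ 2 := by
  simp only [gramBelow, gramAbove, Set.mem_union, Set.mem_iUnion, Set.mem_ofPred_eq,
    Finset.mem_univ, Finset.mem_offDiag, exists_prop, not_or, not_exists, not_and, not_le,
    true_and] at hω
  exact sub_mul_le_singVal_sq hK (A ω) ha ht (fun k k' => (hω.1 (k, k')).le)
    fun k k' hne => (hω.2 (k, k') hne).le

lemma singVal_one_sq_le_add_mul_of_notMem (hK : 0 < K) (ha : 0 ≤ a) (ht : 0 ≤ t) {ω : Ω}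
    (hω : ω ∉ (⋃ p ∈ Finset.univ, gramAbove A a c t p) ∪
      ⋃ p ∈ Finset.univ.offDiag, gramBelow A a c t p) :
    singVal (A ω) 1 ^ 2 ≤ K * a + c + K * t := by
  simp only [gramBelow, gramAbove, Set.mem_union, Set.mem_iUnion, Set.mem_ofPred_eq,
    Finset.mem_univ, Finset.mem_offDiag, exists_prop, not_or, not_exists, not_and, not_le,
    true_and] at hω
  exact singVal_one_sq_le_add_mul hK (A ω) ha ht (fun k k' => (hω.1 (k, k')).le)
    fun k k' hne => (hω.2 (k, k') hne).le

lemma exists_singVal_sq_bounds_outside [MeasurableSpace Ω] {μ : Measure Ω} (hK : 0 < K)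
    (ha : 0 ≤ a) (ht : 0 ≤ t) {δ : ℝ}
    (htail : ∀ p, μ.real (gramBelow A a c t p) ≤ δ ∧ μ.real (gramAbove A a c t p) ≤ δ) :
    ∃ B₁ B₂ : Set Ω, μ.real B₁ ≤ K * (2 * K - 1) * δ ∧ μ.real B₂ ≤ K * (2 * K - 1) * δ ∧
      (∀ ω ∉ B₁, c - K * t ≤ singVal (A ω) K ^ 2) ∧
      (∀ ω ∉ B₂, singVal (A ω) 1 ^ 2 ≤ K * a + c + K * t) := by
  refine ⟨_, _, ?_, ?_, fun ω => sub_mul_le_singVal_sq_of_notMem hK ha ht,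
    fun ω => singVal_one_sq_le_add_mul_of_notMem hK ha ht⟩
  · simpa using measureReal_biUnion_univ_union_offDiag_le (htail · |>.1) (htail · |>.2)
  · simpa using measureReal_biUnion_univ_union_offDiag_le (htail · |>.2) (htail · |>.1)

end GramEvents

section Concentration

variable {Ω : Type*} [MeasurableSpace Ω] {μ : Measure Ω} [IsProbabilityMeasure μ]

-- Hoeffding's lemma: a `[0, 1]`-valued variable is sub-Gaussian with parameter `1 / 4`.
lemma hasSubgaussianMGF_sum_sub_integral {ι : Type*} [Fintype ι] {Z : ι → Ω → ℝ}
    (hindep : iIndepFun Z μ) (hmeas : ∀ i, AEMeasurable (Z i) μ)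
    (hZ : ∀ i, ∀ᵐ ω ∂μ, Z i ω ∈ Set.Icc (0 : ℝ) 1) :
    HasSubgaussianMGF (fun ω => ∑ i, (Z i ω - μ[Z i])) (Fintype.card ι / 4) μ := by
  have hcentered : iIndepFun (fun i ω => Z i ω - μ[Z i]) μ :=
    hindep.comp (fun i (x : ℝ) => x - ∫ ω, Z i ω ∂μ) fun _ => measurable_id.sub_const _
  have hsum := HasSubgaussianMGF.sum_of_iIndepFun (s := Finset.univ) hcentered
    fun i _ => hasSubgaussianMGF_of_mem_Icc (hmeas i) (hZ i)
  convert hsum using 1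
  norm_num [div_eq_mul_inv]

end Concentration

section RandomBlocks

variable {Ω : Type*} [MeasurableSpace Ω] {μ : Measure Ω} [IsProbabilityMeasure μ] {L M K : ℕ}
  {Θl : Fin L → Ω → Matrix (Fin M) (Fin K) ℝ}

lemma measureReal_sum_gram_sub_ge_le (hmeas : ∀ l c k, Measurable fun ω => Θl l ω c k)
    (hindep : iIndepFun
      (fun l : Fin L => fun ω => (fun c k => Θl l ω c k : Fin M → Fin K → ℝ)) μ)
    (hsimplex : ∀ᵐ ω ∂μ, ∀ (l : Fin L) (k : Fin K),
      (∀ c, 0 ≤ Θl l ω c k) ∧ ∑ c, Θl l ω c k = 1)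
    (k k' : Fin K) {m : ℝ} (hm : ∀ l, ∫ ω, ((Θl l ω)ᵀ * Θl l ω) k k' ∂μ = m)
    {ε : ℝ} (hε : 0 ≤ ε) :
    μ.real {ω | ε ≤ (∑ l, (Θl l ω)ᵀ * Θl l ω) k k' - L * m} ≤ Real.exp (-(2 * ε ^ 2 / L)) ∧
    μ.real {ω | ε ≤ L * m - (∑ l, (Θl l ω)ᵀ * Θl l ω) k k'} ≤ Real.exp (-(2 * ε ^ 2 / L)) := by
  set φ : (Fin M → Fin K → ℝ) → ℝ := fun A => ∑ c, A c k * A c k'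
  have hφ : Measurable φ := by fun_prop
  have hgram : ∀ l ω, ((Θl l ω)ᵀ * Θl l ω) k k' = φ (Θl l ω) := fun l ω => by
    simp [φ, mul_apply]
  have hΘ : ∀ l, Measurable fun ω => (fun c k => Θl l ω c k : Fin M → Fin K → ℝ) := fun l =>
    measurable_pi_lambda _ fun c => measurable_pi_lambda _ fun k => hmeas l c k
  have hsub := hasSubgaussianMGF_sum_sub_integral (hindep.comp (fun _ => φ) fun _ => hφ)
    (fun l => (hφ.comp (hΘ l)).aemeasurable) fun l => by
      filter_upwards [hsimplex] with ω hω
      exact dotProduct_mem_Icc_of_mem_stdSimplex (hω l k) (hω l k')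
  have hsum : ∀ ω, ∑ l, (φ (Θl l ω) - ∫ ω', φ (Θl l ω') ∂μ)
      = (∑ l, (Θl l ω)ᵀ * Θl l ω) k k' - L * m := fun ω => by
    simp only [← hgram, hm, Finset.sum_sub_distrib, Matrix.sum_apply]
    simp
  have hX : HasSubgaussianMGF (fun ω => (∑ l, (Θl l ω)ᵀ * Θl l ω) k k' - L * m) (L / 4) μ := by
    simpa [hsum] using hsub
  have hexp : -(2 * ε ^ 2 / L) = -ε ^ 2 / (2 * (L / 4)) := by ring
  rw [hexp]
  exact ⟨by simpa using hX.measure_ge_le hε, by simpa using hX.neg.measure_ge_le hε⟩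

lemma measureReal_gramBelow_le_and_gramAbove_le
    (hmeas : ∀ l c k, Measurable fun ω => Θl l ω c k)
    (hindep : iIndepFun
      (fun l : Fin L => fun ω => (fun c k => Θl l ω c k : Fin M → Fin K → ℝ)) μ)
    (hsimplex : ∀ᵐ ω ∂μ, ∀ (l : Fin L) (k : Fin K),
      (∀ c, 0 ≤ Θl l ω c k) ∧ ∑ c, Θl l ω c k = 1)
    {a c : ℝ} (hmom : ∀ (l : Fin L) (k k' : Fin K),
      ∫ ω, ((Θl l ω)ᵀ * Θl l ω) k k' ∂μ = a + if k = k' then c else 0)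
    {Th : Ω → Matrix (Fin (L * M)) (Fin K) ℝ}
    (hTh : ∀ ω (i : Fin (L * M)) (k : Fin K),
      Th ω i k = Θl (finProdFinEquiv.symm i).1 ω (finProdFinEquiv.symm i).2 k)
    {t : ℝ} (ht : 0 ≤ t) (p : Fin K × Fin K) :
    μ.real (gramBelow Th (L * a) (L * c) t p) ≤ Real.exp (-(2 * t ^ 2 / L)) ∧
      μ.real (gramAbove Th (L * a) (L * c) t p) ≤ Real.exp (-(2 * t ^ 2 / L)) := by
  obtain ⟨k, k'⟩ := p
  have hscale : (L : ℝ) * a + (if k = k' then L * c else 0)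
      = L * (a + if k = k' then c else 0) := by split_ifs <;> ring
  obtain ⟨habove, hbelow⟩ :=
    measureReal_sum_gram_sub_ge_le hmeas hindep hsimplex k k' (hmom · k k') ht
  simp only [gramBelow, gramAbove, hscale,
    transpose_mul_self_of_forall_eq_blocks (Th _) (Θl · _) (hTh _)]
  exact ⟨hbelow, habove⟩

end RandomBlocks

lemma mul_two_mul_sub_one_mul_exp_neg_le {K x y : ℝ} (hK : 0 ≤ K) (hKx : K ≤ Real.exp x)
    (hxy : 3 * x ≤ y) : K * (2 * K - 1) * Real.exp (-y) ≤ K * Real.exp (-x) := by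
  have hsq : 2 * K - 1 ≤ Real.exp x ^ 2 := by
    nlinarith [sq_nonneg (K - 1), pow_le_pow_left₀ hK hKx 2]
  calc K * (2 * K - 1) * Real.exp (-y) ≤ K * (Real.exp x ^ 2 * Real.exp (-y)) := by
        rw [mul_assoc]
        gcongr
    _ ≤ K * Real.exp (-x) := by
        rw [← Real.exp_nat_mul, ← Real.exp_add]
        gcongr
        push_cast
        linarith

lemma pos_and_sq_div_sq_le {r s β γ : ℝ} (hβ : 0 < β) (hs : 0 ≤ s) (hβs : β ≤ s ^ 2)
    (hr : r ^ 2 ≤ γ) : 0 < s ∧ r ^ 2 / s ^ 2 ≤ γ / β := by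
  have hs2 : 0 < s ^ 2 := hβ.trans_le hβs
  exact ⟨lt_of_le_of_ne hs fun h => by simp [← h] at hs2,
    div_le_div₀ ((sq_nonneg r).trans hr) hr hβ hβs⟩

/-- singular values of a stack of independent random stochastic blocks;
abstracted Dirichlet-prior lemma. -/
theorem stmt17 (L M K : ℕ) (hL : 0 < L) (hK : 0 < K)
    (Ω : Type) (_ : MeasurableSpace Ω) (μ : Measure Ω) (_ : IsProbabilityMeasure μ)
    (Θl : Fin L → Ω → Matrix (Fin M) (Fin K) ℝ)
    (hmeas : ∀ l c k, Measurable fun ω => Θl l ω c k)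
    -- the blocks Θ₁, …, Θ_L are mutually independent
    (hindep : iIndepFun
      (fun l : Fin L => fun ω => (fun c k => Θl l ω c k : Fin M → Fin K → ℝ)) μ)
    -- almost surely, every column of every block lies in the probability simplex
    (hsimplex : ∀ᵐ ω ∂μ, ∀ (l : Fin L) (k : Fin K),
      (∀ c, 0 ≤ Θl l ω c k) ∧ ∑ c, Θl l ω c k = 1)
    (a c₁ c₂ : ℝ) (ha0 : 0 ≤ a) (hc₁0 : 0 < c₁)
    (hc₂ : c₂ = K * a + c₁)
    -- second-moment identity `E[(Θ_l)ᵀ·Θ_l] = a·1·1ᵀ + c₁·I`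
    (hmom : ∀ (l : Fin L) (k k' : Fin K),
      ∫ ω, ((Θl l ω)ᵀ * Θl l ω) k k' ∂μ = a + if k = k' then c₁ else 0)
    -- `Th` is the vertical stack of the blocks Θ₁, …, Θ_L
    (Th : Ω → Matrix (Fin (L * M)) (Fin K) ℝ)
    (hTh : ∀ ω (i : Fin (L * M)) (k : Fin K),
      Th ω i k = Θl (finProdFinEquiv.symm i).1 ω (finProdFinEquiv.symm i).2 k) :
    ENNReal.ofReal (1 - K * Real.exp (-(c₁ ^ 2 * L / (80 * K ^ 2)))) ≤
        μ {ω | c₁ * L / 2 ≤ singVal (Th ω) K ^ 2} ∧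
    ENNReal.ofReal (1 - K * Real.exp (-(c₁ ^ 2 * L / (80 * K ^ 2)))) ≤
        μ {ω | singVal (Th ω) 1 ^ 2 ≤ 3 * c₂ * L / 2} ∧
    ENNReal.ofReal (1 - 2 * K * Real.exp (-(c₁ ^ 2 * L / (80 * K ^ 2)))) ≤
        μ {ω | 0 < singVal (Th ω) K ∧
            singVal (Th ω) 1 ^ 2 / singVal (Th ω) K ^ 2 ≤ 3 * c₂ / c₁} := by
  set x := c₁ ^ 2 * L / (80 * K ^ 2)
  set t := c₁ * L / (2 * K)
  have hKR : (0 : ℝ) < K := Nat.cast_pos.2 hK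
  rcases lt_or_ge (Real.exp x) K with hKx | hKx
  · have hbig : 1 < K * Real.exp (-x) := by
      rwa [Real.exp_neg, ← div_eq_mul_inv, one_lt_div (Real.exp_pos x)]
    simp only [ENNReal.ofReal_of_nonpos (by linarith : 1 - K * Real.exp (-x) ≤ 0),
      ENNReal.ofReal_of_nonpos (by linarith : 1 - 2 * K * Real.exp (-x) ≤ 0), zero_le, and_self]
  have hLa : 0 ≤ (L : ℝ) * a := by positivity
  have hKt : (K : ℝ) * t = c₁ * L / 2 := by
    simp only [t]
    field_simp
  have hexp : 2 * t ^ 2 / L = 40 * x := by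
    simp only [t, x]
    field_simp
    ring
  obtain ⟨B₁, B₂, hB₁, hB₂, hσK, hσ₁⟩ := exists_singVal_sq_bounds_outside (t := t) hK hLa
    (by positivity) (measureReal_gramBelow_le_and_gramAbove_le hmeas hindep hsimplex hmom hTh
      (by positivity))
  have hδ : K * (2 * K - 1) * Real.exp (-(2 * t ^ 2 / L)) ≤ K * Real.exp (-x) :=
    mul_two_mul_sub_one_mul_exp_neg_le hKR.le hKx <| by
      rw [hexp]
      linarith [show 0 ≤ x by positivity]
  have hgood₁ : ∀ ω ∉ B₁, c₁ * L / 2 ≤ singVal (Th ω) K ^ 2 := fun ω hω => by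
    linarith [hσK ω hω]
  have hgood₂ : ∀ ω ∉ B₂, singVal (Th ω) 1 ^ 2 ≤ 3 * c₂ * L / 2 := fun ω hω => by
    rw [hc₂]
    linarith [hσ₁ ω hω, mul_nonneg hKR.le hLa]
  refine ⟨ofReal_one_sub_le_of_compl_subset (hB₁.trans hδ) hgood₁,
    ofReal_one_sub_le_of_compl_subset (hB₂.trans hδ) hgood₂,
    ofReal_one_sub_le_of_compl_subset (B := B₁ ∪ B₂)
      ((measureReal_union_le _ _).trans (by linarith)) fun ω hω => ?_⟩
  rw [Set.mem_union, not_or] at hω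
  have hratio := pos_and_sq_div_sq_le (by positivity) (singVal_nonneg _ _) (hgood₁ ω hω.1)
    (hgood₂ ω hω.2)
  rwa [show 3 * c₂ * L / 2 / (c₁ * L / 2) = 3 * c₂ / c₁ by field_simp] at hratio
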